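/- Assume 0 < p, q < 1 with p + q ≠ 1, 0 < p_s, p_s^e < 1 with p_s ≠ p_s^e, A ≠ 0, that C x² + D x + E ≠ 0 for all x ∈ [0,1], and let 0 < p_ℓ ≤ p_u ≤ 1. Define f(x) = (A x + B)/(C x² + D x + E), Δ = B² C² + A C (A E − B D), and p* = min(p_u, max(p_ℓ, (−B C + √Δ)/(A C))). Then f(x) ≤ f(p*) for every x ∈ [p_ℓ, p_u]. -/

import Mathlib

/-!
Write `g x = C x² + D x + E` and `u x = A C x + B C`. The identity
`(A C)² ((A y + B) g x - (A x + B) g y) = (u x - u y) (u x u y - Δ)` shows that, where `g < 0`,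
`f x ≤ f y` as soon as `u y` lies between `u x` and `√Δ` and `u x ≥ -√Δ`. The candidate `r` is the
point with `u r = √Δ`, and since `u` is affine, `u` of the clamped candidate lies between `u x` and
`√Δ` for every admissible `x`. It remains to check the hypotheses for the paper's coefficients:
`B, C, E < 0`, `Δ` factors as a square times a positive quantity, `g < 0` on `[0, 1]` by the
intermediate value theorem, and `u ≥ -√Δ` on `[0, 1]` reduces to `u 1 ≥ -√Δ`, a polynomial
inequality in `p_s`, `p_s^e` and `p + q` that is proved separately for `p + q < 1` and, using
`g 1 < 0`, for `p + q > 1`.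
-/

noncomputable section

/-- A = p q [p_s² (1−p_s^e)(p+q−2) + (p_s^e)² (1−p_s)(p+q)] -/
def Acoef (p q ps pse : ℝ) : ℝ :=
  p * q * (ps ^ 2 * (1 - pse) * (p + q - 2) + pse ^ 2 * (1 - ps) * (p + q))
/-- B = p q (p+q)(2 p_s p_s^e − p_s − p_s^e) -/
def Bcoef (p q ps pse : ℝ) : ℝ := p * q * (p + q) * (2 * ps * pse - ps - pse)
/-- C = (p_s p_s^e − p_s − p_s^e) p_s p_s^e (p+q−1)² (p+q) -/
def Ccoef (p q ps pse : ℝ) : ℝ :=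
  (ps * pse - ps - pse) * ps * pse * (p + q - 1) ^ 2 * (p + q)
/-- D = (p_s p_s^e − p_s − p_s^e)(p_s + p_s^e)(1−p−q)(p+q)² -/
def Dcoef (p q ps pse : ℝ) : ℝ :=
  (ps * pse - ps - pse) * (ps + pse) * (1 - p - q) * (p + q) ^ 2
/-- E = (p_s p_s^e − p_s − p_s^e)(p+q)³ -/
def Ecoef (p q ps pse : ℝ) : ℝ := (ps * pse - ps - pse) * (p + q) ^ 3

open Set

theorem IsPreconnected.forall_lt_zero_of_ne_zero {X : Type*} [TopologicalSpace X] {s : Set X}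
    {f : X → ℝ} (hs : IsPreconnected s) (hf : ContinuousOn f s) {a : X} (ha : a ∈ s)
    (hfa : f a < 0) (hne : ∀ x ∈ s, f x ≠ 0) : ∀ x ∈ s, f x < 0 := by
  intro x hx
  by_contra! hfx
  obtain ⟨c, hc, hc0⟩ := hs.intermediate_value ha hx hf ⟨hfa.le, hfx⟩
  exact hne c hc hc0

lemma sub_mul_mul_sub_sq_nonneg {u v s : ℝ} (hs : 0 ≤ s) (hu : -s ≤ u)
    (hv : 0 ≤ (u - v) * (v - s)) : 0 ≤ (u - v) * (u * v - s ^ 2) := by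
  rcases lt_trichotomy u v with huv | rfl | hvu
  · have hvs : v ≤ s := nonpos_of_mul_nonneg_right hv (sub_neg.2 huv) |> sub_nonpos.1
    have : u * v ≤ s ^ 2 := by
      nlinarith [mul_nonneg (neg_le_iff_add_nonneg.1 hu) (sub_nonneg.2 hvs)]
    exact mul_nonneg_of_nonpos_of_nonpos (by linarith) (by linarith)
  · simp
  · have hsv : s ≤ v := nonneg_of_mul_nonneg_right hv (sub_pos.2 hvu) |> sub_nonneg.1
    have : s ^ 2 ≤ u * v := by
      nlinarith [mul_le_mul hsv (hsv.trans hvu.le) hs (hs.trans hsv)]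
    exact mul_nonneg (by linarith) (by linarith)

lemma sub_min_max_mul_nonneg {x l h : ℝ} (r : ℝ) (hx : x ∈ Icc l h) :
    0 ≤ (x - min h (max l r)) * (min h (max l r) - r) := by
  obtain ⟨hlx, hxh⟩ := hx
  rcases le_total r l with hrl | hlr
  · rw [max_eq_left hrl, min_eq_right (hlx.trans hxh)]
    exact mul_nonneg (by linarith) (by linarith)
  rcases le_total r h with hrh | hhr
  · simp [max_eq_right hlr, min_eq_right hrh]
  · rw [max_eq_right hlr, min_eq_left hhr]
    exact mul_nonneg_of_nonpos_of_nonpos (by linarith) (by linarith)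

section AffineDivQuadratic

variable {A B C D E : ℝ}

lemma affine_div_quadratic_le_of_nonneg {x y : ℝ} (hAC : A * C ≠ 0)
    (hgx : C * x ^ 2 + D * x + E < 0) (hgy : C * y ^ 2 + D * y + E < 0)
    (h : 0 ≤ ((A * C * x + B * C) - (A * C * y + B * C)) *
      ((A * C * x + B * C) * (A * C * y + B * C) - (B ^ 2 * C ^ 2 + A * C * (A * E - B * D)))) :
    (A * x + B) / (C * x ^ 2 + D * x + E) ≤ (A * y + B) / (C * y ^ 2 + D * y + E) := by
  have hcross : 0 ≤ (A * y + B) * (C * x ^ 2 + D * x + E) - (A * x + B) * (C * y ^ 2 + D * y + E) := by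
    refine nonneg_of_mul_nonneg_right (le_of_le_of_eq h ?_) (sq_pos_of_ne_zero hAC)
    ring
  rw [← neg_div_neg_eq, ← neg_div_neg_eq (A * y + B),
    div_le_div_iff₀ (neg_pos.2 hgx) (neg_pos.2 hgy)]
  linarith

theorem affine_div_quadratic_le_clamp {pl pu : ℝ} (hAC : A * C ≠ 0)
    (hΔ : 0 ≤ B ^ 2 * C ^ 2 + A * C * (A * E - B * D))
    (hg : ∀ t ∈ Icc (0 : ℝ) 1, C * t ^ 2 + D * t + E < 0)
    (h0 : -√(B ^ 2 * C ^ 2 + A * C * (A * E - B * D)) ≤ B * C)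
    (h1 : -√(B ^ 2 * C ^ 2 + A * C * (A * E - B * D)) ≤ A * C + B * C)
    (hpl : 0 ≤ pl) (hpu : pu ≤ 1) (x : ℝ) (hx : x ∈ Icc pl pu) :
    let y := min pu (max pl ((-(B * C) + √(B ^ 2 * C ^ 2 + A * C * (A * E - B * D))) / (A * C)))
    (A * x + B) / (C * x ^ 2 + D * x + E) ≤ (A * y + B) / (C * y ^ 2 + D * y + E) := by
  intro y
  set s := √(B ^ 2 * C ^ 2 + A * C * (A * E - B * D))
  set r := (-(B * C) + s) / (A * C)
  have hur : A * C * r + B * C = s := by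
    rw [mul_div_cancel₀ _ hAC]
    ring
  have hy : y ∈ Icc pl pu := ⟨le_min (hx.1.trans hx.2) (le_max_left _ _), min_le_left _ _⟩
  have hux : -s ≤ A * C * x + B * C := by
    have hx0 : 0 ≤ x := hpl.trans hx.1
    have hx1 : 0 ≤ 1 - x := by linarith [hx.2]
    nlinarith [mul_le_mul_of_nonneg_left h1 hx0, mul_le_mul_of_nonneg_left h0 hx1]
  have hbetween : 0 ≤ ((A * C * x + B * C) - (A * C * y + B * C)) * ((A * C * y + B * C) - s) := by
    have : ((A * C * x + B * C) - (A * C * y + B * C)) * ((A * C * y + B * C) - s)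
        = (A * C) ^ 2 * ((x - y) * (y - r)) := by
      rw [← hur]
      ring
    rw [this]
    exact mul_nonneg (sq_nonneg _) (sub_min_max_mul_nonneg r hx)
  have hsub : Icc pl pu ⊆ Icc 0 1 := Icc_subset_Icc hpl hpu
  refine affine_div_quadratic_le_of_nonneg hAC (hg x (hsub hx)) (hg y (hsub hy)) ?_
  rw [← Real.sq_sqrt hΔ]
  exact sub_mul_mul_sub_sq_nonneg (Real.sqrt_nonneg _) hux hbetween

end AffineDivQuadratic

section GapPolynomial

/- With `u = p_s`, `v = p_s^e`, `s = p + q` this is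
`(A E - B D - C A - 2 C B) / ((p_s p_s^e - p_s - p_s^e) p q (p + q))`, and
`Δ - (A C + B C)² = A C (A E - B D - C A - 2 C B)`. -/
def gapPoly (u v s : ℝ) : ℝ :=
  (u ^ 2 * (1 - v) * (s - 2) + v ^ 2 * (1 - u) * s) * (s ^ 2 - u * v * (s - 1) ^ 2)
    + (2 * u * v - u - v) * (s - 1) * s * (s * (u + v) - 2 * u * v * (s - 1))

variable {u v s : ℝ}

lemma gapPoly_nonneg_of_lt_one (hu0 : 0 < u) (hu1 : u < 1) (hv0 : 0 < v) (hv1 : v < 1)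
    (hs0 : 0 < s) (hs1 : s < 1) (ha : 0 ≤ u ^ 2 * (1 - v) * (s - 2) + v ^ 2 * (1 - u) * s) :
    0 ≤ gapPoly u v s := by
  have : 0 < 1 - u := by linarith
  have : 0 < 1 - v := by linarith
  have : 0 < 1 - s := by linarith
  have : 0 < 2 - s := by linarith
  have : 0 < 2 - v := by linarith
  have hsum : gapPoly u v s
      = (u ^ 2 * (1 - v) * (s - 2) + v ^ 2 * (1 - u) * s) * s ^ 2
        + u ^ 3 * v * (1 - v) * (2 - s) * (1 - s) ^ 2
        + (1 - s) * s * (u * (1 - v) * (s * (u + v) + 2 * u * v * (1 - s))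
          + v * (1 - u) * s * (u + v) + u * v ^ 2 * (1 - u) * (1 - s) * (2 - v)) := by
    unfold gapPoly; ring
  rw [hsum]
  positivity

lemma gapPoly_nonneg_of_one_lt (hu0 : 0 < u) (hu1 : u < 1) (hv0 : 0 < v) (hv1 : v < 1)
    (hs1 : 1 < s) (ha : 0 ≤ u ^ 2 * (1 - v) * (s - 2) + v ^ 2 * (1 - u) * s)
    (hab : 0 ≤ u ^ 2 * (1 - v) * (s - 2) + v ^ 2 * (1 - u) * s + s * (2 * u * v - u - v))
    (hG : 0 ≤ u * v * (s - 1) ^ 2 - (u + v) * (s - 1) * s + s ^ 2) :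
    0 ≤ gapPoly u v s := by
  have huv : 0 < u + v - 2 * u * v := by nlinarith [mul_pos hu0 (sub_pos.2 hv1)]
  have hX : 0 ≤ s * (u + v) - 2 * u * v * (s - 1) := by nlinarith [mul_pos hu0 hv0]
  have hsum : gapPoly u v s
      = (u ^ 2 * (1 - v) * (s - 2) + v ^ 2 * (1 - u) * s)
          * (u * v * (s - 1) ^ 2 - (u + v) * (s - 1) * s + s ^ 2)
        + (s - 1) * (s * (u + v) - 2 * u * v * (s - 1))
          * (u ^ 2 * (1 - v) * (s - 2) + v ^ 2 * (1 - u) * s + s * (2 * u * v - u - v)) := by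
    unfold gapPoly; ring
  rw [hsum]
  exact add_nonneg (mul_nonneg ha hG) (mul_nonneg (mul_nonneg (by linarith) hX) hab)

end GapPolynomial

section Coefficients

variable {p q ps pse : ℝ}

lemma ps_mul_pse_sub_sub_neg (hs0 : 0 < ps) (he0 : 0 < pse) (he1 : pse < 1) :
    ps * pse - ps - pse < 0 := by
  nlinarith

lemma Bcoef_neg (hp0 : 0 < p) (hq0 : 0 < q) (hs0 : 0 < ps) (hs1 : ps < 1) (he0 : 0 < pse)
    (he1 : pse < 1) : Bcoef p q ps pse < 0 :=
  mul_neg_of_pos_of_neg (by positivity) (by nlinarith)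

lemma Ccoef_neg (hpq0 : 0 < p + q) (hpq : p + q ≠ 1) (hs0 : 0 < ps) (he0 : 0 < pse)
    (he1 : pse < 1) : Ccoef p q ps pse < 0 := by
  have hsq : 0 < (p + q - 1) ^ 2 := sq_pos_of_ne_zero (sub_ne_zero.2 hpq)
  have : Ccoef p q ps pse = (ps * pse - ps - pse) * (ps * pse * (p + q - 1) ^ 2 * (p + q)) := by
    unfold Ccoef; ring
  rw [this]
  exact mul_neg_of_neg_of_pos (ps_mul_pse_sub_sub_neg hs0 he0 he1) (by positivity)

lemma Ecoef_neg (hpq0 : 0 < p + q) (hs0 : 0 < ps) (he0 : 0 < pse) (he1 : pse < 1) :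
    Ecoef p q ps pse < 0 :=
  mul_neg_of_neg_of_pos (ps_mul_pse_sub_sub_neg hs0 he0 he1) (by positivity)

lemma discriminant_eq (p q ps pse : ℝ) :
    Bcoef p q ps pse ^ 2 * Ccoef p q ps pse ^ 2 + Acoef p q ps pse * Ccoef p q ps pse *
      (Acoef p q ps pse * Ecoef p q ps pse - Bcoef p q ps pse * Dcoef p q ps pse)
    = ((ps * pse - ps - pse) * p * q * (p + q) ^ 2 * (p + q - 1) * (ps - pse)) ^ 2 *
      (ps * pse * (ps + (p + q) * pse * (1 - ps)) * (pse + (2 - (p + q)) * ps * (1 - pse))) := by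
  unfold Acoef Bcoef Ccoef Dcoef Ecoef
  ring

lemma discriminant_nonneg (hp0 : 0 < p) (hq0 : 0 < q) (hpq2 : p + q < 2) (hs0 : 0 < ps)
    (hs1 : ps < 1) (he0 : 0 < pse) (he1 : pse < 1) :
    0 ≤ Bcoef p q ps pse ^ 2 * Ccoef p q ps pse ^ 2 + Acoef p q ps pse * Ccoef p q ps pse *
      (Acoef p q ps pse * Ecoef p q ps pse - Bcoef p q ps pse * Dcoef p q ps pse) := by
  have : 0 < 1 - ps := by linarith
  have : 0 < 1 - pse := by linarith
  have : 0 < 2 - (p + q) := by linarith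
  rw [discriminant_eq]
  positivity

lemma discriminant_sub_sq_eq (p q ps pse : ℝ) :
    Bcoef p q ps pse ^ 2 * Ccoef p q ps pse ^ 2 + Acoef p q ps pse * Ccoef p q ps pse *
        (Acoef p q ps pse * Ecoef p q ps pse - Bcoef p q ps pse * Dcoef p q ps pse)
      - (Acoef p q ps pse * Ccoef p q ps pse + Bcoef p q ps pse * Ccoef p q ps pse) ^ 2
    = Acoef p q ps pse * Ccoef p q ps pse *
      ((ps * pse - ps - pse) * (p * q * ((p + q) * gapPoly ps pse (p + q)))) := by
  have hgap : Acoef p q ps pse * Ecoef p q ps pse - Bcoef p q ps pse * Dcoef p q ps pse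
      - Ccoef p q ps pse * Acoef p q ps pse - 2 * Ccoef p q ps pse * Bcoef p q ps pse
      = (ps * pse - ps - pse) * (p * q * ((p + q) * gapPoly ps pse (p + q))) := by
    unfold Acoef Bcoef Ccoef Dcoef Ecoef gapPoly; ring
  rw [← hgap]
  ring

lemma gapPoly_nonneg (hp0 : 0 < p) (hq0 : 0 < q) (hpq : p + q ≠ 1) (hs0 : 0 < ps)
    (hs1 : ps < 1) (he0 : 0 < pse) (he1 : pse < 1) (hA : 0 < Acoef p q ps pse)
    (hAB : 0 < Acoef p q ps pse + Bcoef p q ps pse)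
    (hg1 : Ccoef p q ps pse * 1 ^ 2 + Dcoef p q ps pse * 1 + Ecoef p q ps pse < 0) :
    0 ≤ gapPoly ps pse (p + q) := by
  have hpq0 : 0 < p * q := mul_pos hp0 hq0
  have hs : 0 < p + q := add_pos hp0 hq0
  have ha : 0 ≤ ps ^ 2 * (1 - pse) * (p + q - 2) + pse ^ 2 * (1 - ps) * (p + q) :=
    (pos_of_mul_pos_right hA hpq0.le).le
  rcases hpq.lt_or_gt with hs1' | hs1'
  · exact gapPoly_nonneg_of_lt_one hs0 hs1 he0 he1 hs hs1' ha
  have hab : Acoef p q ps pse + Bcoef p q ps pse = p * q *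
      (ps ^ 2 * (1 - pse) * (p + q - 2) + pse ^ 2 * (1 - ps) * (p + q)
        + (p + q) * (2 * ps * pse - ps - pse)) := by
    unfold Acoef Bcoef; ring
  have hg : Ccoef p q ps pse * 1 ^ 2 + Dcoef p q ps pse * 1 + Ecoef p q ps pse =
      (ps * pse - ps - pse) * ((p + q) * (ps * pse * (p + q - 1) ^ 2
        - (ps + pse) * (p + q - 1) * (p + q) + (p + q) ^ 2)) := by
    unfold Ccoef Dcoef Ecoef; ring
  rw [hab] at hAB
  rw [hg] at hg1
  have hG := pos_of_mul_pos_right (pos_of_mul_neg_right hg1 (ps_mul_pse_sub_sub_neg hs0 he0 he1).le)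
    hs.le
  exact gapPoly_nonneg_of_one_lt hs0 hs1 he0 he1 hs1' ha (pos_of_mul_pos_right hAB hpq0.le).le hG.le

lemma sq_add_le_discriminant (hp0 : 0 < p) (hq0 : 0 < q) (hpq : p + q ≠ 1) (hs0 : 0 < ps)
    (hs1 : ps < 1) (he0 : 0 < pse) (he1 : pse < 1) (hA : 0 < Acoef p q ps pse)
    (hAB : 0 < Acoef p q ps pse + Bcoef p q ps pse)
    (hg1 : Ccoef p q ps pse * 1 ^ 2 + Dcoef p q ps pse * 1 + Ecoef p q ps pse < 0) :
    (Acoef p q ps pse * Ccoef p q ps pse + Bcoef p q ps pse * Ccoef p q ps pse) ^ 2 ≤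
      Bcoef p q ps pse ^ 2 * Ccoef p q ps pse ^ 2 + Acoef p q ps pse * Ccoef p q ps pse *
        (Acoef p q ps pse * Ecoef p q ps pse - Bcoef p q ps pse * Dcoef p q ps pse) := by
  have hAC : Acoef p q ps pse * Ccoef p q ps pse < 0 :=
    mul_neg_of_pos_of_neg hA (Ccoef_neg (add_pos hp0 hq0) hpq hs0 he0 he1)
  have hgap := gapPoly_nonneg hp0 hq0 hpq hs0 hs1 he0 he1 hA hAB hg1
  have hpos : 0 ≤ p * q * ((p + q) * gapPoly ps pse (p + q)) := by
    have := add_pos hp0 hq0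
    positivity
  rw [← sub_nonneg, discriminant_sub_sq_eq]
  exact mul_nonneg_of_nonpos_of_nonpos hAC.le
    (mul_nonpos_of_nonpos_of_nonneg (ps_mul_pse_sub_sub_neg hs0 he0 he1).le hpos)

lemma neg_sqrt_discriminant_le (hp0 : 0 < p) (hq0 : 0 < q) (hpq : p + q ≠ 1) (hs0 : 0 < ps)
    (hs1 : ps < 1) (he0 : 0 < pse) (he1 : pse < 1)
    (hg1 : Ccoef p q ps pse * 1 ^ 2 + Dcoef p q ps pse * 1 + Ecoef p q ps pse < 0) :
    -√(Bcoef p q ps pse ^ 2 * Ccoef p q ps pse ^ 2 + Acoef p q ps pse * Ccoef p q ps pse *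
        (Acoef p q ps pse * Ecoef p q ps pse - Bcoef p q ps pse * Dcoef p q ps pse)) ≤
      Acoef p q ps pse * Ccoef p q ps pse + Bcoef p q ps pse * Ccoef p q ps pse := by
  rcases le_or_gt 0 (Acoef p q ps pse * Ccoef p q ps pse + Bcoef p q ps pse * Ccoef p q ps pse)
    with h | h
  · exact (neg_nonpos.2 (Real.sqrt_nonneg _)).trans h
  have hB := Bcoef_neg hp0 hq0 hs0 hs1 he0 he1
  have hC := Ccoef_neg (add_pos hp0 hq0) hpq hs0 he0 he1
  have hA : 0 < Acoef p q ps pse := by nlinarith [mul_pos_of_neg_of_neg hB hC]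
  have hAB : 0 < Acoef p q ps pse + Bcoef p q ps pse := by nlinarith
  exact Real.neg_sqrt_le_of_sq_le (sq_add_le_discriminant hp0 hq0 hpq hs0 hs1 he0 he1 hA hAB hg1)

end Coefficients

theorem stmt3 (p q ps pse pl pu : ℝ)
    (hp0 : 0 < p) (hp1 : p < 1) (hq0 : 0 < q) (hq1 : q < 1) (hpq : p + q ≠ 1)
    (hs0 : 0 < ps) (hs1 : ps < 1) (he0 : 0 < pse) (he1 : pse < 1)
    (hA : Acoef p q ps pse ≠ 0)
    (hden : ∀ x ∈ Set.Icc (0 : ℝ) 1,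
      Ccoef p q ps pse * x ^ 2 + Dcoef p q ps pse * x + Ecoef p q ps pse ≠ 0)
    (hl : 0 < pl) (hu : pu ≤ 1) :
    let A := Acoef p q ps pse
    let B := Bcoef p q ps pse
    let C := Ccoef p q ps pse
    let D := Dcoef p q ps pse
    let E := Ecoef p q ps pse
    let f : ℝ → ℝ := fun x => (A * x + B) / (C * x ^ 2 + D * x + E)
    let Δ := B ^ 2 * C ^ 2 + A * C * (A * E - B * D)
    let pstar := min pu (max pl ((-(B * C) + Real.sqrt Δ) / (A * C)))
    ∀ x ∈ Set.Icc pl pu, f x ≤ f pstar := by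
  intro A B C D E f Δ pstar
  have hpq0 : 0 < p + q := add_pos hp0 hq0
  have hB := Bcoef_neg hp0 hq0 hs0 hs1 he0 he1
  have hC := Ccoef_neg hpq0 hpq hs0 he0 he1
  have hg : ∀ t ∈ Icc (0 : ℝ) 1, C * t ^ 2 + D * t + E < 0 :=
    isPreconnected_Icc.forall_lt_zero_of_ne_zero (by fun_prop) (left_mem_Icc.2 zero_le_one)
      (by simpa using Ecoef_neg hpq0 hs0 he0 he1) hden
  have hΔ : 0 ≤ Δ := discriminant_nonneg hp0 hq0 (by linarith) hs0 hs1 he0 he1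
  have h0 : -√Δ ≤ B * C := (neg_nonpos.2 (Real.sqrt_nonneg _)).trans (mul_pos_of_neg_of_neg hB hC).le
  exact affine_div_quadratic_le_clamp (mul_ne_zero hA hC.ne) hΔ hg h0
    (neg_sqrt_discriminant_le hp0 hq0 hpq hs0 hs1 he0 he1 (hg 1 (right_mem_Icc.2 zero_le_one)))
    hl.le hu
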